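/- Let Λ = {(k1,k2,k3,k12,k13,k23,k123) ∈ ℕ^7 : k12·k13·k23 = 0}, and let m1,...,m123 be the seven vectors m1=(1,1,0,0,0,1), m2=(0,1,1,0,1,0), m3=(0,0,1,1,0,1), m12=(1,0,1,0,1,1), m13=(1,1,1,1,0,0), m23=(0,1,0,1,1,1), m123=(1,0,0,1,1,0) in ℕ^6. Then the map Λ → ℕ^6 sending (k1,...,k123) to k1·m1 + k2·m2 + k3·m3 + k12·m12 + k13·m13 + k23·m23 + k123·m123 is injective: any two distinct elements of Λ give distinct vectors. -/
import Mathlib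


/-- The map sending an exponent vector to its Dehn–Thurston intersection coordinates. -/
def dtMap (k : Fin 7 → ℕ) : Fin 6 → ℕ :=
  k 0 • ![1,1,0,0,0,1] + k 1 • ![0,1,1,0,1,0] + k 2 • ![0,0,1,1,0,1]
    + k 3 • ![1,0,1,0,1,1] + k 4 • ![1,1,1,1,0,0] + k 5 • ![0,1,0,1,1,1]
    + k 6 • ![1,0,0,1,1,0]

set_option maxHeartbeats 2000000 in
theorem stmt_4 (u v : Fin 7 → ℕ) (hu : u 3 * u 4 * u 5 = 0) (hv : v 3 * v 4 * v 5 = 0)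
    (h : dtMap u = dtMap v) : u = v := by
  simp only [dtMap, funext_iff, Fin.forall_fin_succ, Pi.add_apply, Pi.smul_apply,
    smul_eq_mul, Matrix.cons_val_zero, Matrix.cons_val_succ, IsEmpty.forall_iff,
    and_true] at h
  obtain ⟨h0, h1, h2, h3, h4, h5⟩ := h
  have hu' : u 3 = 0 ∨ u 4 = 0 ∨ u 5 = 0 := by
    rcases mul_eq_zero.mp hu with h' | h'
    · rcases mul_eq_zero.mp h' with h'' | h''
      exacts [Or.inl h'', Or.inr (Or.inl h'')]
    · exact Or.inr (Or.inr h')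
  have hv' : v 3 = 0 ∨ v 4 = 0 ∨ v 5 = 0 := by
    rcases mul_eq_zero.mp hv with h' | h'
    · rcases mul_eq_zero.mp h' with h'' | h''
      exacts [Or.inl h'', Or.inr (Or.inl h'')]
    · exact Or.inr (Or.inr h')
  rcases hu' with hu'' | hu'' | hu'' <;> rcases hv' with hv'' | hv'' | hv'' <;>
  · have e0 : u 0 = v 0 := by omega
    have e1 : u 1 = v 1 := by omega
    have e2 : u 2 = v 2 := by omega
    have e3 : u 3 = v 3 := by omega
    have e4 : u 4 = v 4 := by omega
    have e5 : u 5 = v 5 := by omega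
    have e6 : u 6 = v 6 := by omega
    funext i
    fin_cases i
    exacts [e0, e1, e2, e3, e4, e5, e6]
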